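/- arXiv:1307.6029 — 2 statements merged into one kernel-verified Lean document; each statement's English description precedes it below -/
import Mathlib

section
/- In the odd-even transposition process on n positions, if agent p starts at even position i, then for every round t with i ≤ t ≤ n−2, after round t agent p is at position t − i + 1. -/
/-- One round of the odd-even transposition process on positions `1..n`:
round `r` swaps positions `(i, i+1)` for all `i < n` with `i` of the same parity as `r`. -/
def oeStep (n r p : ℕ) : ℕ :=
  if r % 2 = 1 then
    if p % 2 = 1 ∧ p < n then p + 1
    else if p % 2 = 0 then p - 1
    else p
  else
    if p % 2 = 0 ∧ p < n then p + 1
    else if p % 2 = 1 ∧ 1 < p then p - 1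
    else p

/-- `oePos n i t` is the position after `t` rounds of the agent that started at position `i`. -/
def oePos (n i : ℕ) : ℕ → ℕ
  | 0 => i
  | t + 1 => oeStep n (t + 1) (oePos n i t)

/-!
The agent's parity relative to the round number decides its motion: when its position and the
round have different parities it is the upper element of a swapped pair and moves down, when they
agree it is the lower element and moves up. Starting at an even position `i`, the agent therefore
walks down to position `1` in rounds `1, …, i - 1`, stays there in the even round `i` (there is
no position `0` to swap with), and from then on always has the parity of the next round, so it
climbs one step per round.
-/

section oeStep

variable {n r p : ℕ}

lemma oeStep_eq_pred (hpar : p % 2 ≠ r % 2) (hp : 1 < p) : oeStep n r p = p - 1 := by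
  unfold oeStep
  split_ifs <;> omega

lemma oeStep_eq_succ (hpar : p % 2 = r % 2) (hp : p < n) : oeStep n r p = p + 1 := by
  unfold oeStep
  split_ifs <;> omega

lemma oeStep_one_of_even (hr : r % 2 = 0) : oeStep n r 1 = 1 := by
  simp [oeStep, hr]

end oeStep

section oePos

variable {n i t p : ℕ}

lemma oePos_add_of_descending (h : oePos n i t = p) (hpar : p % 2 = t % 2) :
    ∀ s, s < p → oePos n i (t + s) = p - s
  | 0, _ => h
  | s + 1, hs => by
    rw [← add_assoc, oePos, oePos_add_of_descending h hpar s (by omega),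
      oeStep_eq_pred (by omega) (by omega)]
    omega

lemma oePos_add_of_ascending (h : oePos n i t = p) (hpar : p % 2 = (t + 1) % 2) :
    ∀ s, p + s ≤ n → oePos n i (t + s) = p + s
  | 0, _ => h
  | s + 1, hs => by
    rw [← add_assoc, oePos, oePos_add_of_ascending h hpar s (by omega),
      oeStep_eq_succ (by omega) (by omega)]
    omega

end oePos

theorem oe_even_position_general (n i : ℕ) (hi1 : 1 ≤ i)
    (hieven : i % 2 = 0) :
    ∀ t, i ≤ t → t ≤ n - 2 → oePos n i t = t - i + 1 := by
  intro t hit htn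
  obtain ⟨k, rfl⟩ : ∃ k, i = k + 1 := ⟨i - 1, by omega⟩
  have hdown : oePos n (k + 1) k = 1 := by
    have hstart : oePos n (k + 1) 0 = k + 1 := rfl
    simpa using oePos_add_of_descending hstart (by omega) k (by omega)
  have hwait : oePos n (k + 1) (k + 1) = 1 := by
    rw [oePos, hdown, oeStep_one_of_even hieven]
  have hup := oePos_add_of_ascending hwait (by omega) (t - (k + 1)) (by omega)
  rw [Nat.add_sub_cancel' hit] at hup
  omega

/-- If an agent starts at an even position `i`, then for every round `t` with
`i ≤ t ≤ n - 2`, after round `t` the agent is at position `t - i + 1`. -/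
theorem oe_even_position (n i : ℕ) (hn : 2 ≤ n) (hi1 : 1 ≤ i) (hin : i ≤ n)
    (hieven : i % 2 = 0) :
    ∀ t, i ≤ t → t ≤ n - 2 → oePos n i t = t - i + 1 :=
  oe_even_position_general n i hi1 hieven
end

section
/- For all n ≥ 3, AC(P_n) = AC(B_n) = n − 2, where P_n is the n-vertex path and B_n is the barbell graph on n vertices. -/
/-- One round of the acquaintance process: the placement (a bijection from agents to
vertices) `x` is updated to `y` by letting agents swap along the edges of a matching of
`G`, i.e. `y = σ ∘ x` for an involution `σ` of the vertices moving each vertex to itself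
or to a neighbor. -/
def IsMatchingStep {V : Type*} (G : SimpleGraph V) (x y : Equiv.Perm V) : Prop :=
  ∃ σ : Equiv.Perm V, (∀ v, σ (σ v) = v) ∧ (∀ v, σ v = v ∨ G.Adj v (σ v)) ∧
    ∀ a, y a = σ (x a)

/-- An `m`-round strategy for acquaintance in `G`: starting from the identity placement,
each round is a matching swap, and every pair of distinct agents is at some time (≤ m)
located on a pair of adjacent vertices. -/
def IsAcqStrategy {V : Type*} (G : SimpleGraph V) (m : ℕ) (f : ℕ → Equiv.Perm V) : Prop :=
  f 0 = Equiv.refl V ∧ (∀ t < m, IsMatchingStep G (f t) (f (t + 1))) ∧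
    ∀ a b : V, a ≠ b → ∃ t ≤ m, G.Adj (f t a) (f t b)

/-- The acquaintance time of `G`: the least number of rounds of a strategy for
acquaintance in `G`. -/
noncomputable def AC {V : Type*} (G : SimpleGraph V) : ℕ :=
  sInf {m | ∃ f : ℕ → Equiv.Perm V, IsAcqStrategy G m f}

/-- The barbell graph on `n` vertices: a clique on the first `⌈n/2⌉` vertices and a clique
on the remaining `⌊n/2⌋` vertices, joined by a single bridge edge. -/
def barbell (n : ℕ) : SimpleGraph (Fin n) :=
  SimpleGraph.fromRel (fun i j =>
    ((i : ℕ) < (n + 1) / 2 ∧ (j : ℕ) < (n + 1) / 2) ∨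
    ((n + 1) / 2 ≤ (i : ℕ) ∧ (n + 1) / 2 ≤ (j : ℕ)) ∨
    ((i : ℕ) = (n + 1) / 2 - 1 ∧ (j : ℕ) = (n + 1) / 2))

/-!
Upper bound: odd-even transposition on the path. In round `t` the agents on the edges
`{p, p + 1}` with `p ≡ t (mod 2)` swap, so every agent walks back and forth along the path,
pausing for one round at each end, and agents starting at even and at odd positions walk in
opposite directions. Any two of them are adjacent at some time `≤ n - 2`. As `P_n ≤ B_n`, the
same strategy works on the barbell.

Lower bound, for any graph in which `uv` is the only edge between a set `L` and its complement:
an agent staying in `L` throughout and one staying in `Lᶜ` throughout can only meet across the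
bridge, so these pairs need pairwise distinct meeting times. Bridge swaps come in runs of
consecutive rounds; each agent leaving its side for the first time is carried over the bridge
in the first round of a run, and a run starting in round `t` rules out meetings at the times `t`
and `t + 1`. With `ρ` runs and `A ≥ |L| - ρ`, `B ≥ |Lᶜ| - ρ` stayers this gives
`2ρ + AB ≤ m + 1`, whence `min (2 min |L| |Lᶜ|) (|V| - 1) ≤ m + 1`.
-/

open Finset SimpleGraph

lemma AC_eq_of_isAcqStrategy {V : Type*} {G : SimpleGraph V} {m : ℕ} {f : ℕ → Equiv.Perm V}
    (hf : IsAcqStrategy G m f) (hmin : ∀ m' f', IsAcqStrategy G m' f' → m ≤ m') : AC G = m :=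
  IsLeast.csInf_eq ⟨⟨f, hf⟩, fun _ ⟨f', hf'⟩ => hmin _ f' hf'⟩

/-- Position after `s` steps of a walk on `0, …, n - 1` that starts at `0` moving right and
bounces off both ends, staying put for one step there. -/
def pathFold (n s : ℕ) : ℕ :=
  if s % (2 * n) < n then s % (2 * n) else 2 * n - 1 - s % (2 * n)

lemma pathFold_cases {n s : ℕ} (hs : s < 3 * n) :
    (s < n ∧ pathFold n s = s) ∨ (n ≤ s ∧ s < 2 * n ∧ pathFold n s = 2 * n - 1 - s) ∨
      (2 * n ≤ s ∧ pathFold n s = s - 2 * n) := by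
  unfold pathFold
  rcases lt_or_ge s (2 * n) with h | h
  · rw [Nat.mod_eq_of_lt h]
    split_ifs <;> omega
  · rw [Nat.mod_eq_sub_mod h, Nat.mod_eq_of_lt (by omega)]
    split_ifs <;> omega

def pathSwap (n t : ℕ) (p : Fin n) : Fin n :=
  ⟨if p.val % 2 = t % 2 then min (p.val + 1) (n - 1) else p.val - 1, by split_ifs <;> omega⟩

lemma pathSwap_val (n t : ℕ) (p : Fin n) :
    (pathSwap n t p).val = if p.val % 2 = t % 2 then min (p.val + 1) (n - 1) else p.val - 1 :=
  rfl

lemma pathSwap_involutive (n t : ℕ) : Function.Involutive (pathSwap n t) := by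
  intro p
  ext
  simp only [pathSwap_val]
  split_ifs <;> omega

lemma pathSwap_eq_or_adj (n t : ℕ) (p : Fin n) :
    pathSwap n t p = p ∨ (pathGraph n).Adj p (pathSwap n t p) := by
  rw [pathGraph_adj, Fin.ext_iff, pathSwap_val]
  split_ifs <;> omega

lemma pathSwap_pathFold {n t s : ℕ} (hst : s % 2 = t % 2) {p : Fin n}
    (hp : p.val = pathFold n s) : (pathSwap n t p).val = pathFold n (s + 1) := by
  have hn : 0 < n := by have := p.isLt; omega
  have hpar : s % (2 * n) % 2 = s % 2 := Nat.mod_mod_of_dvd s (dvd_mul_right 2 n)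
  have hlt : s % (2 * n) < 2 * n := Nat.mod_lt _ (by omega)
  have hsucc := Nat.add_mod_eq_ite (k := 2 * n) (m := s) (n := 1)
  rw [Nat.mod_eq_of_lt (a := 1) (by omega)] at hsucc
  unfold pathFold at hp ⊢
  rw [pathSwap_val, hsucc]
  generalize s % (2 * n) = r at *
  split_ifs at hp ⊢ <;> omega

/-- Even agents start on the outward leg of the walk `pathFold n`, odd agents on the way back.
The phase is always even, so that the agent's parity matches the round's swaps. -/
def pathPhase (n a : ℕ) : ℕ := if a % 2 = 0 then a else 2 * n - 1 - a

def pathStrategy (n : ℕ) : ℕ → Equiv.Perm (Fin n)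
  | 0 => Equiv.refl _
  | t + 1 => (pathStrategy n t).trans (pathSwap_involutive n t).toPerm

lemma pathStrategy_val (n t : ℕ) (a : Fin n) :
    (pathStrategy n t a).val = pathFold n (t + pathPhase n a) := by
  have ha := a.isLt
  induction t with
  | zero =>
    show a.val = pathFold n (0 + pathPhase n a)
    rw [zero_add]
    unfold pathPhase
    split_ifs
    · rcases pathFold_cases (n := n) (s := a) (by omega) with h | h | h <;> omega
    · rcases pathFold_cases (n := n) (s := 2 * n - 1 - a) (by omega) with h | h | h <;> omega
  | succ t ih =>
    rw [add_right_comm]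
    exact pathSwap_pathFold (by unfold pathPhase; split_ifs <;> omega) ih

lemma exists_adj_pathStrategy {n : ℕ} {a b : Fin n} (hab : a.val < b.val) :
    ∃ t ≤ n - 2, (pathGraph n).Adj (pathStrategy n t a) (pathStrategy n t b) := by
  have hb := b.isLt
  simp only [pathGraph_adj, pathStrategy_val, pathPhase]
  have fold_a := fun t (ht : t ≤ n - 2) => pathFold_cases (n := n)
    (s := t + if a.val % 2 = 0 then a.val else 2 * n - 1 - a.val) (by split_ifs <;> omega)
  have fold_b := fun t (ht : t ≤ n - 2) => pathFold_cases (n := n)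
    (s := t + if b.val % 2 = 0 then b.val else 2 * n - 1 - b.val) (by split_ifs <;> omega)
  by_cases ha2 : a.val % 2 = 0 <;> by_cases hb2 : b.val % 2 = 0 <;>
    simp only [ha2, hb2, if_true, if_false] at fold_a fold_b ⊢
  · have := fold_a (n - 1 - (a + b) / 2) (by omega)
    have := fold_b (n - 1 - (a + b) / 2) (by omega)
    exact ⟨n - 1 - (a + b) / 2, by omega, by omega⟩
  · have := fold_a ((b - a - 1) / 2) (by omega)
    have := fold_b ((b - a - 1) / 2) (by omega)
    exact ⟨(b - a - 1) / 2, by omega, by omega⟩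
  · by_cases hba : b.val = a.val + 1
    · have := fold_a 0 (by omega)
      have := fold_b 0 (by omega)
      exact ⟨0, by omega, by omega⟩
    · have := fold_a (n - (b - a + 1) / 2) (by omega)
      have := fold_b (n - (b - a + 1) / 2) (by omega)
      exact ⟨n - (b - a + 1) / 2, by omega, by omega⟩
  · have := fold_a ((a + b) / 2) (by omega)
    have := fold_b ((a + b) / 2) (by omega)
    exact ⟨(a + b) / 2, by omega, by omega⟩

theorem isAcqStrategy_pathStrategy (n : ℕ) :
    IsAcqStrategy (pathGraph n) (n - 2) (pathStrategy n) := by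
  refine ⟨rfl, fun t _ => ⟨(pathSwap_involutive n t).toPerm, pathSwap_involutive n t,
    pathSwap_eq_or_adj n t, fun _ => rfl⟩, ?_⟩
  intro a b hab
  rcases lt_or_gt_of_ne (Fin.val_ne_of_ne hab) with h | h
  · exact exists_adj_pathStrategy h
  · obtain ⟨t, ht, hadj⟩ := exists_adj_pathStrategy h
    exact ⟨t, ht, hadj.symm⟩

lemma min_two_mul_min_le {l r ρ A B M : ℕ} (hl : l ≤ A + ρ) (hr : r ≤ B + ρ)
    (h : 2 * ρ + A * B ≤ M) : min (2 * min l r) (l + r - 1) ≤ M := by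
  rcases le_or_gt (min l r) ρ with hρ | hρ
  · exact (min_le_left _ _).trans (by omega)
  · have hA : 1 ≤ A := by omega
    have hB : 1 ≤ B := by omega
    have : A + B ≤ A * B + 1 := by nlinarith
    exact (min_le_right _ _).trans (by omega)

section Bridge

variable {V : Type*}

def IsSoleCutEdge (G : SimpleGraph V) (L : Finset V) (u v : V) : Prop :=
  ∀ x y, G.Adj x y → x ∈ L → y ∉ L → x = u ∧ y = v

lemma IsSoleCutEdge.compl [Fintype V] [DecidableEq V] {G : SimpleGraph V} {L : Finset V}
    {u v : V} (h : IsSoleCutEdge G L u v) : IsSoleCutEdge G Lᶜ v u :=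
  fun x y hxy hx hy => (h y x hxy.symm (by simpa using hy) (mem_compl.1 hx)).symm

def CrossesAt (f : ℕ → Equiv.Perm V) (u v : V) (t : ℕ) : Prop :=
  f (t + 1) ((f t).symm u) = v

instance [DecidableEq V] (f : ℕ → Equiv.Perm V) (u v : V) : DecidablePred (CrossesAt f u v) :=
  fun _ => inferInstanceAs (Decidable (_ = _))

def bridgeRunStarts [DecidableEq V] (f : ℕ → Equiv.Perm V) (u v : V) (m : ℕ) : Finset ℕ :=
  (range m).filter fun t => CrossesAt f u v t ∧ (0 < t → ¬ CrossesAt f u v (t - 1))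

def stayers [Fintype V] [DecidableEq V] (f : ℕ → Equiv.Perm V) (m : ℕ) (L : Finset V) :
    Finset V :=
  univ.filter fun a => ∀ t ∈ range (m + 1), f t a ∈ L

def bridgeMeetings [Fintype V] [DecidableEq V] (f : ℕ → Equiv.Perm V) (m : ℕ) (L : Finset V)
    (u v : V) : Finset ℕ :=
  (range (m + 1)).filter fun t => (f t).symm u ∈ stayers f m L ∧ (f t).symm v ∈ stayers f m Lᶜ

end Bridge

namespace IsAcqStrategy

variable {V : Type*} {G H : SimpleGraph V} {m : ℕ} {f : ℕ → Equiv.Perm V}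

theorem mono (hf : IsAcqStrategy G m f) (hGH : G ≤ H) : IsAcqStrategy H m f := by
  obtain ⟨h0, hstep, hmeet⟩ := hf
  refine ⟨h0, fun t ht => ?_, fun a b hab => ?_⟩
  · obtain ⟨σ, hσ, hadj, hy⟩ := hstep t ht
    exact ⟨σ, hσ, fun v => (hadj v).imp_right (@hGH _ _), hy⟩
  · obtain ⟨t, ht, hadj⟩ := hmeet a b hab
    exact ⟨t, ht, hGH hadj⟩

lemma eq_or_adj_succ (hf : IsAcqStrategy G m f) {t : ℕ} (ht : t < m) (a : V) :
    f (t + 1) a = f t a ∨ G.Adj (f t a) (f (t + 1) a) := by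
  obtain ⟨σ, -, hadj, hy⟩ := hf.2.1 t ht
  rw [hy]
  exact hadj _

lemma crossesAt_symm (hf : IsAcqStrategy G m f) {t : ℕ} (ht : t < m) {u v : V}
    (h : CrossesAt f u v t) : CrossesAt f v u t := by
  obtain ⟨σ, hσ, -, hy⟩ := hf.2.1 t ht
  unfold CrossesAt at h ⊢
  rw [hy, Equiv.apply_symm_apply] at h ⊢
  rw [← h, hσ]

variable [DecidableEq V] {L : Finset V} {u v : V}

lemma bridgeRunStarts_comm (hf : IsAcqStrategy G m f) :
    bridgeRunStarts f v u m = bridgeRunStarts f u v m := by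
  have key : ∀ t < m, CrossesAt f v u t ↔ CrossesAt f u v t :=
    fun t ht => ⟨hf.crossesAt_symm ht, hf.crossesAt_symm ht⟩
  ext t
  simp only [bridgeRunStarts, mem_filter, mem_range]
  constructor <;> rintro ⟨ht, hcross, hfirst⟩
  · exact ⟨ht, (key t ht).1 hcross, fun h0 h => hfirst h0 ((key _ (by omega)).2 h)⟩
  · exact ⟨ht, (key t ht).2 hcross, fun h0 h => hfirst h0 ((key _ (by omega)).1 h)⟩

lemma exists_mem_bridgeRunStarts (hf : IsAcqStrategy G m f) (hcut : IsSoleCutEdge G L u v)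
    (hv : v ∉ L) {a : V} (ha : a ∈ L) {s : ℕ} (hs : s ≤ m) (has : f s a ∉ L) :
    ∃ t ∈ bridgeRunStarts f u v m, (f t).symm u = a := by
  -- `a` leaves `L` for the first time in round `t`; had the bridge been used in round `t - 1`
  -- as well, `a` would have been at `v` at time `t - 1`.
  have hex : ∃ s, f s a ∉ L := ⟨s, has⟩
  have hmin : ∀ r < Nat.find hex, f r a ∈ L := fun r hr => not_not.1 (Nat.find_min hex hr)
  obtain ⟨t, ht⟩ : ∃ t, Nat.find hex = t + 1 := by
    refine Nat.exists_eq_succ_of_ne_zero fun h => ?_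
    have := Nat.find_spec hex
    rw [h, hf.1] at this
    exact this ha
  have htm : t < m := by have := Nat.find_min' hex has; omega
  have hleave : f (t + 1) a ∉ L := ht ▸ Nat.find_spec hex
  have hstay : f t a ∈ L := hmin t (by omega)
  obtain ⟨hu, hv'⟩ := hcut _ _ ((hf.eq_or_adj_succ htm a).resolve_left
    fun h => hleave (h ▸ hstay)) hstay hleave
  have hau : (f t).symm u = a := by rw [← hu, Equiv.symm_apply_apply]
  refine ⟨t, ?_, hau⟩
  simp only [bridgeRunStarts, mem_filter, mem_range]
  refine ⟨htm, by rw [CrossesAt, hau, hv'], fun ht0 hcross => ?_⟩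
  obtain ⟨r, rfl⟩ : ∃ r, t = r + 1 := Nat.exists_eq_succ_of_ne_zero (by omega)
  rw [Nat.add_sub_cancel] at hcross
  have hback : f (r + 1) ((f r).symm v) = u := hf.crossesAt_symm (by omega) hcross
  have hrv : f r a = v := by
    rw [← hau, ← hback, Equiv.symm_apply_apply, Equiv.apply_symm_apply]
  exact hv (hrv ▸ hmin r (by omega))

variable [Fintype V]

lemma card_le_card_stayers_add (hf : IsAcqStrategy G m f) (hcut : IsSoleCutEdge G L u v)
    (hv : v ∉ L) : #L ≤ #(stayers f m L) + #(bridgeRunStarts f u v m) := by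
  have hleavers : #(L \ stayers f m L) ≤ #(bridgeRunStarts f u v m) := by
    refine card_le_card_of_surjOn (fun t => (f t).symm u) fun a ha => ?_
    simp only [coe_sdiff, Set.mem_sdiff, mem_coe, stayers, mem_filter, mem_univ, true_and,
      mem_range, not_forall] at ha
    obtain ⟨ha, s, hs, has⟩ := ha
    exact hf.exists_mem_bridgeRunStarts hcut hv ha (by omega) has
  have := card_le_card_sdiff_add_card (s := L) (t := stayers f m L)
  omega

lemma card_stayers_mul_card_stayers_le (hf : IsAcqStrategy G m f)
    (hcut : IsSoleCutEdge G L u v) :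
    #(stayers f m L) * #(stayers f m Lᶜ) ≤ #(bridgeMeetings f m L u v) := by
  rw [← card_product]
  refine card_le_card_of_surjOn (fun t => ((f t).symm u, (f t).symm v)) ?_
  rintro ⟨a, b⟩ hab
  obtain ⟨has, hbs⟩ := mem_product.1 (mem_coe.1 hab)
  have ha := (mem_filter.1 has).2
  have hb := (mem_filter.1 hbs).2
  have hne : a ≠ b := fun h => mem_compl.1 (hb 0 (by simp)) (h ▸ ha 0 (by simp))
  obtain ⟨t, ht, hadj⟩ := hf.2.2 a b hne
  have htm : t ∈ range (m + 1) := mem_range.2 (by omega)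
  obtain ⟨hu, hv⟩ := hcut _ _ hadj (ha t htm) (mem_compl.1 (hb t htm))
  refine ⟨t, ?_, ?_⟩
  · simp only [bridgeMeetings, coe_filter, Set.mem_ofPred_eq, ← hu, ← hv,
      Equiv.symm_apply_apply]
    exact ⟨htm, has, hbs⟩
  · simp only [← hu, ← hv, Equiv.symm_apply_apply]

lemma two_mul_card_bridgeRunStarts_add_card_bridgeMeetings_le (hf : IsAcqStrategy G m f)
    (hv : v ∉ L) : 2 * #(bridgeRunStarts f u v m) + #(bridgeMeetings f m L u v) ≤ m + 1 := by
  set R := bridgeRunStarts f u v m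
  set W := bridgeMeetings f m L u v
  have hR : ∀ t ∈ R, t < m ∧ CrossesAt f u v t ∧ (0 < t → ¬ CrossesAt f u v (t - 1)) :=
    fun t ht => by simpa [R, bridgeRunStarts] using ht
  have hW : ∀ t ∈ W, ∀ s ≤ m, f s ((f t).symm u) ∈ L :=
    fun t ht s hs => (mem_filter.1 (mem_filter.1 ht).2.1).2 s (mem_range.2 (by omega))
  have hRR : Disjoint (R.map (addRightEmbedding 1)) R := by
    simp only [Finset.disjoint_left, mem_map, addRightEmbedding_apply]
    rintro _ ⟨t, ht, rfl⟩ ht'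
    exact (hR _ ht').2.2 (by omega) (by simpa using (hR t ht).2.1)
  have hRW : Disjoint R W := by
    refine Finset.disjoint_left.2 fun t hr hw => hv ?_
    obtain ⟨htm, hcross, -⟩ := hR t hr
    exact hcross ▸ hW t hw (t + 1) (by omega)
  have hRW' : Disjoint (R.map (addRightEmbedding 1)) W := by
    simp only [Finset.disjoint_left, mem_map, addRightEmbedding_apply]
    rintro _ ⟨t, hr, rfl⟩ hw
    obtain ⟨htm, hcross, -⟩ := hR t hr
    have hback : f (t + 1) ((f t).symm v) = u := hf.crossesAt_symm htm hcross
    have := hW (t + 1) hw t (by omega)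
    rw [← hback, Equiv.symm_apply_apply, Equiv.apply_symm_apply] at this
    exact hv this
  have hsub : R.map (addRightEmbedding 1) ∪ R ∪ W ⊆ range (m + 1) := by
    intro t ht
    simp only [mem_union, mem_map, addRightEmbedding_apply] at ht
    rcases ht with (⟨s, hs, rfl⟩ | ht) | ht
    · exact mem_range.2 (by have := (hR s hs).1; omega)
    · exact mem_range.2 (by have := (hR t ht).1; omega)
    · exact (mem_filter.1 ht).1
  calc 2 * #R + #W = #(R.map (addRightEmbedding 1) ∪ R ∪ W) := by
        rw [card_union_of_disjoint (disjoint_union_left.2 ⟨hRW', hRW⟩),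
          card_union_of_disjoint hRR, card_map]
        ring
    _ ≤ m + 1 := by simpa using card_le_card hsub

theorem min_le_of_isSoleCutEdge (hf : IsAcqStrategy G m f) (hcut : IsSoleCutEdge G L u v)
    (hu : u ∈ L) (hv : v ∉ L) : min (2 * min #L #Lᶜ) (Fintype.card V - 1) ≤ m + 1 := by
  have hL := hf.card_le_card_stayers_add hcut hv
  have hLc := hf.card_le_card_stayers_add hcut.compl (by simpa using hu)
  rw [hf.bridgeRunStarts_comm] at hLc
  rw [← card_add_card_compl L]
  exact min_two_mul_min_le hL hLc <|
    (Nat.add_le_add_left (hf.card_stayers_mul_card_stayers_le hcut) _).trans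
      (hf.two_mul_card_bridgeRunStarts_add_card_bridgeMeetings_le hv)

end IsAcqStrategy

lemma pathGraph_le_barbell (n : ℕ) : pathGraph n ≤ barbell n := by
  intro i j h
  rw [pathGraph_adj] at h
  simp only [barbell, fromRel_adj]
  exact ⟨fun e => by rw [e] at h; omega, by omega⟩

lemma barbell_isSoleCutEdge {n : ℕ} (hn : 2 ≤ n) :
    IsSoleCutEdge (barbell n) (univ.filter fun i : Fin n => i.val < (n + 1) / 2)
      ⟨(n + 1) / 2 - 1, by omega⟩ ⟨(n + 1) / 2, by omega⟩ := by
  intro x y hxy hx hy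
  simp only [mem_filter, mem_univ, true_and, not_lt] at hx hy
  simp only [barbell, fromRel_adj] at hxy
  constructor <;> ext <;> dsimp only <;> omega

lemma le_of_isAcqStrategy_barbell {n m : ℕ} {f : ℕ → Equiv.Perm (Fin n)}
    (hf : IsAcqStrategy (barbell n) m f) : n - 2 ≤ m := by
  obtain hn | hn := lt_or_ge n 2
  · omega
  have hbound := hf.min_le_of_isSoleCutEdge (barbell_isSoleCutEdge hn) (by simp; omega)
    (by simp)
  rw [card_compl, Fin.card_filter_val_lt, Fintype.card_fin] at hbound
  omega

theorem AC_path_barbell_general (n : ℕ) :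
    AC (SimpleGraph.pathGraph n) = n - 2 ∧ AC (barbell n) = n - 2 := by
  have hpath := isAcqStrategy_pathStrategy n
  have hle := pathGraph_le_barbell n
  exact ⟨AC_eq_of_isAcqStrategy hpath fun _ _ hf => le_of_isAcqStrategy_barbell (hf.mono hle),
    AC_eq_of_isAcqStrategy (hpath.mono hle) fun _ _ => le_of_isAcqStrategy_barbell⟩

/-- For `n ≥ 3`, the acquaintance times of the `n`-vertex path and of the barbell graph
on `n` vertices are both exactly `n - 2`. -/
theorem AC_path_barbell (n : ℕ) (hn : 3 ≤ n) :
    AC (SimpleGraph.pathGraph n) = n - 2 ∧ AC (barbell n) = n - 2 :=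
  AC_path_barbell_general n
end
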